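/- Let n ∈ ℤ, let G be a nontrivial additive subgroup of ℂ, and let φ be a ½-derivation of the not-finitely graded Heisenberg–Witt algebra HW_n(G). Then for every α ∈ G and i ∈ ℤ, the element φ(L_{α,i}) lies in the span of the basis elements {L_{β,j} : β ∈ G, j ∈ ℤ}; that is, φ(L_{α,i}) has no component along any H_{β,j}. -/

import Mathlib

/-- Basis of the not-finitely graded Heisenberg–Witt algebra HW_n(G):
elements `L α i` and `H α i` for α ∈ G, i ∈ ℤ. -/
inductive HWBasis (G : AddSubgroup ℂ) : Type
  | L : ↥G → ℤ → HWBasis G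
  | H : ↥G → ℤ → HWBasis G

/-- Underlying vector space of HW_n(G): the free ℂ-module on `HWBasis G`. -/
abbrev HWnG (G : AddSubgroup ℂ) : Type := HWBasis G →₀ ℂ

noncomputable def Lh (G : AddSubgroup ℂ) (α : ↥G) (i : ℤ) : HWnG G :=
  Finsupp.single (HWBasis.L α i) 1

noncomputable def Hh (G : AddSubgroup ℂ) (α : ↥G) (i : ℤ) : HWnG G :=
  Finsupp.single (HWBasis.H α i) 1

/-- The Lie bracket of HW_n(G) on basis elements. -/
noncomputable def hwBracketBasis (n : ℤ) (G : AddSubgroup ℂ) :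
    HWBasis G → HWBasis G → HWnG G
  | HWBasis.L α i, HWBasis.L β j =>
      ((β : ℂ) - (α : ℂ)) • Lh G (α + β) (i + j) +
        ((j : ℂ) - (i : ℂ)) • Lh G (α + β) (i + j + n)
  | HWBasis.L α i, HWBasis.H β j =>
      (β : ℂ) • Hh G (α + β) (i + j) + (j : ℂ) • Hh G (α + β) (i + j + n)
  | HWBasis.H α i, HWBasis.L β j =>
      -((α : ℂ) • Hh G (β + α) (j + i) + (i : ℂ) • Hh G (β + α) (j + i + n))
  | HWBasis.H _ _, HWBasis.H _ _ => 0

/-- The Lie bracket of HW_n(G), extended bilinearly from the basis. -/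
noncomputable def hwBracket (n : ℤ) (G : AddSubgroup ℂ) :
    HWnG G →ₗ[ℂ] HWnG G →ₗ[ℂ] HWnG G :=
  Finsupp.lift (HWnG G →ₗ[ℂ] HWnG G) ℂ (HWBasis G) fun x =>
    Finsupp.lift (HWnG G) ℂ (HWBasis G) fun y => hwBracketBasis n G x y

/-- `φ` is a ½-derivation of HW_n(G). -/
def IsHalfDerivationHW (n : ℤ) (G : AddSubgroup ℂ) (φ : HWnG G →ₗ[ℂ] HWnG G) : Prop :=
  ∀ x y : HWnG G, φ (hwBracket n G x y) =
    (1 / 2 : ℂ) • (hwBracket n G (φ x) y + hwBracket n G x (φ y))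

variable (n : ℤ) (G : AddSubgroup ℂ)

lemma hwBracket_single (z : HWBasis G) (c : ℂ) (y : HWnG G) :
    hwBracket n G (Finsupp.single z c) y = c • (y.sum fun w d => d • hwBracketBasis n G z w) := by
  rw [hwBracket, Finsupp.lift_apply, Finsupp.sum_single_index (by simp)]
  simp [Finsupp.lift_apply, Finsupp.smul_sum]

lemma bracket_LL (α β : ↥G) (a b : ℤ) :
    hwBracket n G (Lh G α a) (Lh G β b)
      = ((β:ℂ) - α) • Lh G (α+β) (a+b) + ((b:ℂ) - a) • Lh G (α+β) (a+b+n) := by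
  rw [Lh, hwBracket_single, Lh, Finsupp.sum_single_index (by simp)]
  simp [hwBracketBasis]

lemma bracket_L_apply_H (α : ↥G) (a : ℤ) (m : HWnG G) (γ : ↥G) (k : ℤ) :
    (hwBracket n G (Lh G α a) m) (HWBasis.H γ k)
      = ((γ:ℂ) - α) * m (HWBasis.H (γ - α) (k - a))
        + ((k:ℂ) - a - n) * m (HWBasis.H (γ - α) (k - a - n)) := by
  induction m using Finsupp.induction_linear with
  | zero => simp
  | add f g hf hg => simp only [map_add, Finsupp.add_apply]; rw [hf, hg]; ring
  | single z c =>
    rw [Lh, hwBracket_single, Finsupp.sum_single_index (by simp), Finsupp.smul_apply,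
      Finsupp.smul_apply]
    cases z with
    | L β j =>
      simp [hwBracketBasis, Lh, Finsupp.single_apply]
    | H β j =>
      classical
      have h1 : (α + β = γ ∧ a + j = k) ↔ (β = γ - α ∧ j = k - a) := by
        constructor
        · rintro ⟨h, h'⟩; exact ⟨by rw [← h]; abel, by omega⟩
        · rintro ⟨h, h'⟩; subst h; exact ⟨by abel, by omega⟩
      have h2 : (α + β = γ ∧ a + j + n = k) ↔ (β = γ - α ∧ j = k - a - n) := by
        constructor
        · rintro ⟨h, h'⟩; exact ⟨by rw [← h]; abel, by omega⟩
        · rintro ⟨h, h'⟩; subst h; exact ⟨by abel, by omega⟩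
      simp only [hwBracketBasis, Hh, Finsupp.smul_apply, Finsupp.add_apply,
        Finsupp.single_apply, HWBasis.H.injEq, smul_eq_mul, h1, h2]
      split_ifs with hA hB hC
      · obtain ⟨hb, hj⟩ := hA
        obtain ⟨-, hj'⟩ := hB
        subst hb; subst hj
        have hn : n = 0 := by omega
        subst hn
        push_cast
        ring
      · obtain ⟨hb, hj⟩ := hA
        subst hb; subst hj
        push_cast
        ring
      · obtain ⟨hb, hj⟩ := hC
        subst hb; subst hj
        push_cast
        ring
      · ring

lemma bracket_apply_L_H (β : ↥G) (b : ℤ) (m : HWnG G) (γ : ↥G) (k : ℤ) :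
    (hwBracket n G m (Lh G β b)) (HWBasis.H γ k)
      = -(((γ:ℂ) - β) * m (HWBasis.H (γ - β) (k - b))
        + ((k:ℂ) - b - n) * m (HWBasis.H (γ - β) (k - b - n))) := by
  induction m using Finsupp.induction_linear with
  | zero => simp
  | add f g hf hg =>
      simp only [map_add, LinearMap.add_apply, Finsupp.add_apply]; rw [hf, hg]; ring
  | single z c =>
    rw [hwBracket_single, Lh, Finsupp.sum_single_index (by simp), one_smul,
      Finsupp.smul_apply]
    cases z with
    | L α' j' =>
      simp [hwBracketBasis, Lh, Finsupp.single_apply]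
    | H β' j' =>
      classical
      have h1 : (β + β' = γ ∧ b + j' = k) ↔ (β' = γ - β ∧ j' = k - b) := by
        constructor
        · rintro ⟨h, h'⟩; exact ⟨by rw [← h]; abel, by omega⟩
        · rintro ⟨h, h'⟩; subst h; exact ⟨by abel, by omega⟩
      have h2 : (β + β' = γ ∧ b + j' + n = k) ↔ (β' = γ - β ∧ j' = k - b - n) := by
        constructor
        · rintro ⟨h, h'⟩; exact ⟨by rw [← h]; abel, by omega⟩
        · rintro ⟨h, h'⟩; subst h; exact ⟨by abel, by omega⟩
      simp only [hwBracketBasis, Hh, Finsupp.neg_apply, Finsupp.smul_apply, Finsupp.add_apply,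
        Finsupp.single_apply, HWBasis.H.injEq, smul_eq_mul, h1, h2]
      split_ifs with hA hB hC
      · obtain ⟨hb, hj⟩ := hA
        obtain ⟨-, hj'⟩ := hB
        subst hb; subst hj
        have hn : n = 0 := by omega
        subst hn
        push_cast
        ring
      · obtain ⟨hb, hj⟩ := hA
        subst hb; subst hj
        push_cast
        ring
      · obtain ⟨hb, hj⟩ := hC
        subst hb; subst hj
        push_cast
        ring
      · ring

lemma scalar_main (ν : ↥G) (hν : (ν:ℂ) ≠ 0) (δ : ℂ) (c : ↥G → ℤ → ℤ → ℂ)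
    (HM : ∀ (α β : ↥G) (a b t : ℤ),
      2*((β:ℂ)-(α:ℂ)) * c (α+β) (a+b) t + 2*((b:ℂ)-(a:ℂ)) * c (α+β) (a+b+n) (t-n)
      = (δ+(β:ℂ))*c β b t + ((t:ℂ)+(b:ℂ)-(n:ℂ))*c β b (t-n)
        - (δ+(α:ℂ))*c α a t - ((t:ℂ)+(a:ℂ)-(n:ℂ))*c α a (t-n)) :
    ∀ s m t, c s m t = 0 := by
  -- (I') :
  have hI : ∀ (α : ↥G) (a t : ℤ),
      (δ-(α:ℂ))*c α a t + ((t:ℂ)+(a:ℂ)-(n:ℂ))*c α a (t-n)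
        = 2*(a:ℂ)*c α (a+n) (t-n) + (δ * c 0 0 t + ((t:ℂ)-(n:ℂ)) * c 0 0 (t-n)) := by
    intro α a t
    have h := HM α 0 a 0 t
    simp only [add_zero] at h
    push_cast at h
    linear_combination h
  have hI0 : ∀ (s : ↥G) (t : ℤ),
      (δ-(s:ℂ))*c s 0 t + ((t:ℂ)-(n:ℂ))*c s 0 (t-n)
        = δ * c 0 0 t + ((t:ℂ)-(n:ℂ)) * c 0 0 (t-n) := by
    intro s t
    have h := hI s 0 t
    push_cast at h
    linear_combination h
  have hA1 : ∀ (α β : ↥G) (t : ℤ),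
      ((β:ℂ)-(α:ℂ))*c (α+β) 0 t = (β:ℂ)*c β 0 t - (α:ℂ)*c α 0 t := by
    intro α β t
    have h := HM α β 0 0 t
    simp only [add_zero, zero_add] at h
    push_cast at h
    linear_combination (1/2)*h + (1/2)*(hI0 β t) - (1/2)*(hI0 α t)
  have h3 : ∀ (α β : ↥G) (t : ℤ), (α:ℂ)*(β:ℂ)*(c β 0 t - c α 0 t) = 0 := by
    intro α β t
    have e3 := hI0 (α+β) t
    push_cast at e3
    linear_combination (δ - ((α:ℂ)+(β:ℂ)))*(hA1 α β t) + ((t:ℂ)-(n:ℂ))*(hA1 α β (t-n))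
      - ((β:ℂ)-(α:ℂ))*e3 + (β:ℂ)*(hI0 β t) - (α:ℂ)*(hI0 α t)
  have cancel : ∀ (x y : ℂ), x ≠ 0 → x * y = 0 → y = 0 := by
    intro x y hx h
    rcases mul_eq_zero.mp h with h | h
    · exact absurd h hx
    · exact h
  have hconst0 : ∀ (α : ↥G) (t : ℤ), c α 0 t = c ν 0 t := by
    intro α t
    by_cases hα : (α:ℂ) = 0
    · have hα0 : α = 0 := by ext; simpa using hα
      subst hα0
      have hmν : c (-ν) 0 t = c ν 0 t := by
        have h := h3 (-ν) ν t
        push_cast at h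
        have h' := cancel (-(ν:ℂ) * ν) (c ν 0 t - c (-ν) 0 t) (mul_ne_zero (neg_ne_zero.mpr hν) hν) (by linear_combination h)
        linear_combination -h'
      have h := hA1 ν (-ν) t
      rw [add_neg_cancel] at h
      push_cast at h
      have h2 := cancel (-2*(ν:ℂ)) (c 0 0 t - c ν 0 t)
        (by simp [hν, two_ne_zero]) (by linear_combination h - (ν:ℂ)*hmν)
      linear_combination h2
    · have h := h3 α ν t
      have h' := cancel ((α:ℂ) * ν) (c ν 0 t - c α 0 t) (mul_ne_zero hα hν) h
      linear_combination -h'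
  have hz : ∀ (α : ↥G) (t : ℤ), c α 0 t = 0 := by
    have hu : ∀ t : ℤ, c ν 0 t = 0 := by
      intro t
      have e1 := hI0 ν t
      have h2 := cancel (ν:ℂ) (c ν 0 t) hν
        (by linear_combination -e1 - δ*(hconst0 0 t) - ((t:ℂ)-(n:ℂ))*(hconst0 0 (t-n))
              + δ*(hconst0 ν t) + ((t:ℂ)-(n:ℂ))*(hconst0 ν (t-n)))
      exact h2
    intro α t
    rw [hconst0 α t, hu t]
  have hI2 : ∀ (α : ↥G) (m t : ℤ),
      (δ-(α:ℂ))*c α m t + ((t:ℂ)+(m:ℂ)-(n:ℂ))*c α m (t-n) = 2*(m:ℂ)*c α (m+n) (t-n) := by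
    intro α m t
    have h := hI α m t
    linear_combination h + δ*(hz 0 t) + ((t:ℂ)-(n:ℂ))*(hz 0 (t-n))
  have hstar : ∀ (α β : ↥G) (m t : ℤ),
      ((β:ℂ)-(α:ℂ))*c (α+β) m t + (m:ℂ)*c (α+β) (m+n) (t-n)
        = (β:ℂ)*c β m t + (m:ℂ)*c β (m+n) (t-n) := by
    intro α β m t
    have h := HM α β 0 m t
    simp only [zero_add] at h
    push_cast at h
    linear_combination (1/2)*h + (1/2)*(hI2 β m t)
      - (1/2)*(δ+(α:ℂ))*(hz α t) - (1/2)*((t:ℂ)+(0:ℂ)-(n:ℂ))*(hz α (t-n))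
  have hc0 : ∀ (s : ↥G) (m t : ℤ), c s m t = c 0 m t := by
    intro s m t
    have hP := hstar s 0 m t
    rw [add_zero] at hP
    push_cast at hP
    have hQ := hstar (s - ν) ν m t
    rw [sub_add_cancel] at hQ
    push_cast at hQ
    have hQ0 := hstar (-ν) ν m t
    rw [neg_add_cancel] at hQ0
    push_cast at hQ0
    have h2 := cancel (2*(ν:ℂ)) (c s m t - c 0 m t)
      (by simp [hν, two_ne_zero]) (by linear_combination hQ - hP - hQ0)
    linear_combination h2
  intro s m t
  have hP := hstar ν 0 m t
  rw [add_zero] at hP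
  push_cast at hP
  have hν0 : c ν m t = 0 := by
    have h2 := cancel (-(ν:ℂ)) (c ν m t) (neg_ne_zero.mpr hν)
      (by linear_combination hP - (m:ℂ)*(hc0 ν (m+n) (t-n)))
    exact h2
  rw [hc0 s m t, ← hc0 ν m t, hν0]

lemma key_coeff (φ : HWnG G →ₗ[ℂ] HWnG G) (hφ : IsHalfDerivationHW n G φ)
    (ν : ↥G) (hν : (ν:ℂ) ≠ 0) (δ : ↥G) :
    ∀ (s : ↥G) (m t : ℤ), φ (Lh G s m) (HWBasis.H (δ + s) (t + m)) = 0 := by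
  apply scalar_main n G ν hν (δ:ℂ) (fun s m t => φ (Lh G s m) (HWBasis.H (δ + s) (t + m)))
  intro α β a b t
  have h := hφ (Lh G α a) (Lh G β b)
  rw [bracket_LL] at h
  have h' := congrArg (fun v : HWnG G => v (HWBasis.H (δ + α + β) (t + a + b))) h
  simp only [map_add, map_smul, Finsupp.add_apply, Finsupp.smul_apply, smul_eq_mul] at h'
  rw [bracket_L_apply_H, bracket_apply_L_H] at h'
  simp only [show δ + α + β - β = δ + α from by abel, show δ + α + β - α = δ + β from by abel,
    show t + a + b - b = t + a from by omega, show t + a + b - a = t + b from by omega,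
    show t + a + b - b - n = (t - n) + a from by omega,
    show t + a + b - a - n = (t - n) + b from by omega] at h'
  push_cast at h'
  simp only [show δ + (α + β) = δ + α + β from by abel,
    show t + (a + b) = t + a + b from by omega,
    show (t - n) + (a + b + n) = t + a + b from by omega,
    show (t - n) + a = t + a - n from by omega,
    show (t - n) + b = t + b - n from by omega]
  linear_combination 2 * h'


/-- for every ½-derivation of HW_n(G), the image φ(L_{α,i}) lies
in the span of the L-basis elements (no component along any H_{β,j}). -/
theorem stmt17 (n : ℤ) (G : AddSubgroup ℂ) (hG : G ≠ ⊥)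
    (φ : HWnG G →ₗ[ℂ] HWnG G) (hφ : IsHalfDerivationHW n G φ) :
    ∀ (α : ↥G) (i : ℤ),
      φ (Lh G α i) ∈ Submodule.span ℂ (Set.range fun p : ↥G × ℤ => Lh G p.1 p.2) := by
  obtain ⟨x, hxG, hx⟩ : ∃ x ∈ G, x ≠ 0 := by
    by_contra hc
    push_neg at hc
    exact hG ((AddSubgroup.eq_bot_iff_forall G).mpr hc)
  set ν : ↥G := ⟨x, hxG⟩ with hνdef
  have hν : (ν:ℂ) ≠ 0 := hx
  intro α i
  have key : ∀ (γ : ↥G) (k : ℤ), φ (Lh G α i) (HWBasis.H γ k) = 0 := by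
    intro γ k
    have h := key_coeff n G φ hφ ν hν (γ - α) α i (k - i)
    rw [show γ - α + α = γ from by abel, show k - i + i = k from by omega] at h
    exact h
  classical
  rw [← Finsupp.sum_single (φ (Lh G α i))]
  apply Submodule.finsuppSum_mem
  intro z hz
  cases z with
  | L β j =>
      have : Finsupp.single (HWBasis.L β j) (φ (Lh G α i) (HWBasis.L β j))
           = (φ (Lh G α i) (HWBasis.L β j)) • Lh G β j := by
        simp [Lh, Finsupp.smul_single]
      rw [this]
      exact Submodule.smul_mem _ _ (Submodule.subset_span ⟨(β, j), rfl⟩)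
  | H γ k =>
      rw [key γ k]
      simp
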